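/- Let H be a connected finite simple graph with |H| ≥ 3 that is triangle-free (the cycle C_3 is not induced-contained in H) and has no pendant vertices. Then for every vertex v of H, the interval [H, D_v(H)] is disconnected. -/

import Mathlib

open SimpleGraph

/-- A finite simple graph, encoded by its number of vertices together with a
simple graph structure on `Fin n`. -/
def FinGraph : Type := Σ n : ℕ, SimpleGraph (Fin n)

namespace FinGraph

/-- The number of vertices of a graph. -/
def order (G : FinGraph) : ℕ := G.1

/-- Induced containment `H ⊴ G`: there is an injection of the vertices of `H`
into the vertices of `G` which preserves and reflects adjacency (equivalently,
`H` is isomorphic to an induced subgraph of `G`). -/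
def Contains (H G : FinGraph) : Prop :=
  ∃ f : Fin H.1 ↪ Fin G.1, ∀ a b : Fin H.1, G.2.Adj (f a) (f b) ↔ H.2.Adj a b

/-- Isomorphism of finite graphs. -/
def Iso (H G : FinGraph) : Prop := Nonempty (H.2 ≃g G.2)

/-- Package a simple graph on an arbitrary finite vertex type as a `FinGraph`. -/
noncomputable def of {V : Type} [Fintype V] (G : SimpleGraph V) : FinGraph :=
  ⟨Fintype.card V, G.comap ⇑(Fintype.equivFin V).symm⟩

end FinGraph

/-- `X` lies strictly between `H` and `G` in the induced containment order. -/
def StrictlyBetween (H G X : FinGraph) : Prop :=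
  H.Contains X ∧ X.Contains G ∧ ¬ X.Iso H ∧ ¬ X.Iso G

/-- The interval `[H,G]` is disconnected: the collection of graphs lying strictly
between `H` and `G` splits into two nonempty disjoint classes, each closed under
isomorphism and jointly exhaustive, such that no member of one class is
induced-contained in a member of the other. -/
def IntervalDisconnected (H G : FinGraph) : Prop :=
  ∃ A B : Set FinGraph,
    A.Nonempty ∧ B.Nonempty ∧ Disjoint A B ∧
    (∀ X : FinGraph, X ∈ A ∪ B ↔ StrictlyBetween H G X) ∧
    (∀ X ∈ A, ∀ Y : FinGraph, X.Iso Y → Y ∈ A) ∧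
    (∀ X ∈ B, ∀ Y : FinGraph, X.Iso Y → Y ∈ B) ∧
    (∀ X ∈ A, ∀ Y ∈ B, ¬ X.Contains Y ∧ ¬ Y.Contains X)

/-- `D_v(H)`: two disjoint copies of `H` with every vertex of the second copy
joined to the vertex `v` of the first copy. -/
def Dv {V : Type} (H : SimpleGraph V) (v : V) : SimpleGraph (Fin 2 × V) where
  Adj x y := (x.1 = y.1 ∧ H.Adj x.2 y.2) ∨ (x = (0, v) ∧ y.1 = 1) ∨ (y = (0, v) ∧ x.1 = 1)
  symm := by
    constructor
    rintro x y (⟨h1, h2⟩ | h | h)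
    · exact Or.inl ⟨h1.symm, h2.symm⟩
    · exact Or.inr (Or.inr h)
    · exact Or.inr (Or.inl h)
  loopless := by
    constructor
    rintro x (⟨-, h⟩ | ⟨h1, h2⟩ | ⟨h1, h2⟩)
    · exact H.loopless.irrefl _ h
    · rw [h1] at h2; simp at h2
    · rw [h1] at h2; simp at h2

/-!
An induced copy of `H` in `D_v(H)` is one of the two copies `{i} × V(H)`: the only edges between
the halves pass through the hub `(0, v)`, and if an edge `pq` of the copy had `q ↦ (0, v)` with `p`
in the second half, every other neighbour of `p` would also be joined to the hub, giving a
triangle; so `p` would be pendant. Connectivity spreads this along the whole copy.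

Hence every `X` strictly between `H` and `D_v(H)` embeds over a full first or a full second copy,
never both. The two classes are separated by whether `X` contains the second copy together with
one vertex `(0, x)` of the first. This is inherited by larger graphs; it holds over a full second
copy (`X ≇ H` supplies the extra vertex), and fails over a full first copy: there the extra vertex
would land in the second half, adjacent to `(0, v)` alone among the first copy, while `(0, x)` is
adjacent to all of the second copy if `x = v` and to none of it otherwise. Finally, a graph below
one over a full second copy is again over the full second copy, since otherwise the larger one
would cover both halves and be `D_v(H)` itself.
-/

namespace SimpleGraph

variable {V W U : Type*} {G : SimpleGraph V} {G' : SimpleGraph W} {K : SimpleGraph U}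

def Embedding.codRestrict (f : G ↪g G') (s : Set W) (h : ∀ x, f x ∈ s) :
    G ↪g G'.induce s where
  toFun x := ⟨f x, h x⟩
  inj' _ _ hxy := f.injective (congrArg Subtype.val hxy)
  map_rel_iff' := f.map_rel_iff

lemma Embedding.isIndContained_induce (f : G ↪g G') {s : Set W} (h : Set.range f ⊆ s) :
    G ⊴ G'.induce s :=
  ⟨f.codRestrict s fun x => h ⟨x, rfl⟩⟩

lemma Embedding.isIndContained_of_range_subset (u : K ↪g G') (f : G ↪g G')
    (h : Set.range u ⊆ Set.range f) : K ⊴ G :=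
  (Embedding.isIndContained_induce u h).trans (Embedding.isoInduceRange f).isIndContained'

lemma Embedding.range_trans_subset (e : K ↪g G) (f : G ↪g G') :
    Set.range (e.trans f) ⊆ Set.range f :=
  Set.range_comp_subset_range e f

lemma IsIndContained.nonempty_iso [Finite V] (h : G ⊴ G') (h' : G' ⊴ G) :
    Nonempty (G ≃g G') := by
  obtain ⟨e⟩ := h
  obtain ⟨g⟩ := h'
  have : Finite W := Finite.of_injective g g.injective
  have hbij := e.injective.bijective_of_nat_card_le (Nat.card_le_card_of_injective g g.injective)
  exact ⟨RelIso.ofSurjective e hbij.2⟩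

end SimpleGraph

lemma Set.range_prodMk {α β : Type*} (a : α) :
    Set.range (Prod.mk a : β → α × β) = {p | p.1 = a} := by
  ext ⟨a', b⟩
  simp [eq_comm]

namespace Dv

variable {V : Type} {H : SimpleGraph V} {v : V} {U U' : Type*} {G : SimpleGraph U}
  {G' : SimpleGraph U'}

@[simp]
lemma adj_mk_mk_iff {i : Fin 2} {a b : V} : (Dv H v).Adj (i, a) (i, b) ↔ H.Adj a b := by
  simp only [Dv, true_and, Prod.mk.injEq]
  constructor
  · rintro (h | ⟨⟨rfl, -⟩, h⟩ | ⟨⟨rfl, -⟩, h⟩) <;> simp_all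
  · exact Or.inl

lemma adj_of_fst_ne {p q : Fin 2 × V} (h : p.1 ≠ q.1) :
    (Dv H v).Adj p q ↔ p = (0, v) ∨ q = (0, v) := by
  constructor
  · rintro (⟨h', -⟩ | ⟨hp, -⟩ | ⟨hq, -⟩)
    exacts [absurd h' h, Or.inl hp, Or.inr hq]
  · rintro (rfl | rfl)
    · exact Or.inr (Or.inl ⟨rfl, by simp only at h; omega⟩)
    · exact Or.inr (Or.inr ⟨rfl, by simp only at h; omega⟩)

def copyEmbedding (i : Fin 2) : H ↪g Dv H v where
  toFun := Prod.mk i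
  inj' := Prod.mk_right_injective i
  map_rel_iff' := adj_mk_mk_iff

@[simp]
lemma range_copyEmbedding (i : Fin 2) :
    Set.range (copyEmbedding (H := H) (v := v) i) = {p | p.1 = i} :=
  Set.range_prodMk i

lemma ncard_insert_copy [Finite V] {i : Fin 2} {p : Fin 2 × V} (hp : p.1 ≠ i) :
    (insert p {q : Fin 2 × V | q.1 = i}).ncard = Nat.card V + 1 := by
  rw [Set.ncard_insert_of_notMem (s := {q : Fin 2 × V | q.1 = i}) hp,
    ← Set.range_prodMk, Set.ncard_range_of_injective (Prod.mk_right_injective i)]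

lemma neighborSet_eq_singleton_of_apply_eq_hub (hG : G.CliqueFree 3) (f : G ↪g Dv H v) {p q : U}
    (hpq : G.Adj p q) (hq : f q = (0, v)) (hp : (f p).1 = 1) : G.neighborSet p = {q} := by
  classical
  refine Set.eq_singleton_iff_unique_mem.2 ⟨hpq, fun z hpz => ?_⟩
  by_cases hz : (f z).1 = 1
  · -- `f z` and `f p` both lie in the second copy, hence are both joined to the hub `f q`
    have hqz : G.Adj q z := f.map_adj_iff.1 (by rw [hq]; exact Or.inr (Or.inl ⟨rfl, hz⟩))
    exact absurd (is3Clique_triple_iff.2 ⟨hpq, hpz, hqz⟩) (hG _)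
  · have hne : (f p).1 ≠ (f z).1 := by rw [hp]; exact Ne.symm hz
    rcases (adj_of_fst_ne hne).1 (f.map_adj_iff.2 hpz) with h | h
    · simp [h] at hp
    · exact f.injective (h.trans hq.symm)

lemma fst_apply_eq_of_adj (hG : G.CliqueFree 3) (hpend : ∀ u, (G.neighborSet u).ncard ≠ 1)
    (f : G ↪g Dv H v) {p q : U} (hpq : G.Adj p q) : (f p).1 = (f q).1 := by
  by_contra hne
  have other_fst {a b : U} (ha : f a = (0, v)) (hab : (f a).1 ≠ (f b).1) : (f b).1 = 1 :=
    Fin.eq_one_of_ne_zero _ fun hb => hab (by rw [ha, hb])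
  rcases (adj_of_fst_ne hne).1 (f.map_adj_iff.2 hpq) with hp | hq
  · apply hpend q
    rw [neighborSet_eq_singleton_of_apply_eq_hub hG f hpq.symm hp (other_fst hp hne)]
    exact Set.ncard_singleton p
  · apply hpend p
    rw [neighborSet_eq_singleton_of_apply_eq_hub hG f hpq hq (other_fst hq (Ne.symm hne))]
    exact Set.ncard_singleton q

lemma fst_apply_eq (hconn : G.Preconnected) (hG : G.CliqueFree 3)
    (hpend : ∀ u, (G.neighborSet u).ncard ≠ 1) (f : G ↪g Dv H v) (a b : U) :
    (f a).1 = (f b).1 := by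
  by_contra hne
  obtain ⟨d, -, hd, hd'⟩ := (hconn a b).some.exists_boundary_dart {x | (f x).1 = (f a).1} rfl
    (fun h => hne h.symm)
  exact hd' ((fst_apply_eq_of_adj hG hpend f d.adj).symm.trans hd)

lemma exists_copy_subset_range [Finite V] (hconn : H.Connected) (hH : H.CliqueFree 3)
    (hpend : ∀ u, (H.neighborSet u).ncard ≠ 1) (f : H ↪g Dv H v) :
    ∃ i, {p | p.1 = i} ⊆ Set.range f := by
  obtain ⟨a⟩ := hconn.nonempty
  have hfst := fst_apply_eq hconn.preconnected hH hpend f a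
  have hsnd : Function.Surjective fun x => (f x).2 :=
    Finite.injective_iff_surjective.1 fun x y hxy =>
      f.injective (Prod.ext ((hfst x).symm.trans (hfst y)) hxy)
  refine ⟨(f a).1, fun p hp => ?_⟩
  obtain ⟨x, hx⟩ := hsnd p.2
  exact ⟨x, Prod.ext ((hfst x).symm.trans hp.symm) hx⟩

lemma isIndContained_of_copy_subset_range (f : G ↪g Dv H v)
    (h0 : {p | p.1 = 0} ⊆ Set.range f) (h1 : {p | p.1 = 1} ⊆ Set.range f) : Dv H v ⊴ G := by
  refine Iso.isIndContained' (RelIso.ofSurjective f fun p => ?_)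
  rcases (by omega : p.1 = 0 ∨ p.1 = 1) with h | h
  exacts [h0 h, h1 h]

abbrev extendedCopy (x : V) : Set (Fin 2 × V) := insert (0, x) {p | p.1 = 1}

def ContainsExtendedCopy (H : SimpleGraph V) (v : V) (G : SimpleGraph U) : Prop :=
  ∃ x, (Dv H v).induce (extendedCopy x) ⊴ G

lemma ContainsExtendedCopy.mono (h : ContainsExtendedCopy H v G) (hGG' : G ⊴ G') :
    ContainsExtendedCopy H v G' :=
  h.imp fun _ hx => hx.trans hGG'

lemma containsExtendedCopy_of_copy_subset_range (hG : ¬ G ⊴ H) (f : G ↪g Dv H v)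
    (h1 : {p | p.1 = 1} ⊆ Set.range f) : ContainsExtendedCopy H v G := by
  obtain ⟨a, ha⟩ : ∃ a, (f a).1 = 0 := by
    by_contra! h
    refine hG (Embedding.isIndContained_of_range_subset f (copyEmbedding 1) ?_)
    rintro _ ⟨a, rfl⟩
    rw [range_copyEmbedding]
    exact Fin.eq_one_of_ne_zero _ (h a)
  refine ⟨(f a).2, Embedding.isIndContained_of_range_subset (Embedding.induce _) f ?_⟩
  rintro _ ⟨⟨p, rfl | hp⟩, rfl⟩
  · exact ⟨a, Prod.ext ha rfl⟩
  · exact h1 hp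

lemma copy_subset_range_of_extendedCopy [Finite V] [Nontrivial V] (hconn : H.Connected)
    (hH : H.CliqueFree 3) (hpend : ∀ u, (H.neighborSet u).ncard ≠ 1) {x : V}
    (g : (Dv H v).induce (extendedCopy x) ↪g Dv H v) : {p | p.1 = 1} ⊆ Set.range g := by
  let e : H ↪g Dv H v :=
    ((copyEmbedding 1).codRestrict (extendedCopy x) fun _ => Or.inr rfl).trans g
  obtain ⟨i, hi⟩ := exists_copy_subset_range hconn hH hpend e
  rcases (by omega : i = 0 ∨ i = 1) with rfl | rfl
  swap
  · exact hi.trans (Embedding.range_trans_subset _ _)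
  exfalso
  let s : extendedCopy x := ⟨(0, x), Set.mem_insert _ _⟩
  have hs : (g s).1 = 1 := by
    by_contra hs
    obtain ⟨y, hy⟩ := hi (show (g s).1 = 0 by omega)
    exact absurd (congrArg (fun p => p.1.1) (g.injective hy) : (1 : Fin 2) = 0) (by decide)
  -- `(0, x)` sees the second copy iff `x = v`; its image `g s` sees `(0, a)` iff `a = v`
  have key : ∀ a y, e y = (0, a) → (x = v ↔ a = v) := by
    intro a y hy
    have h1 : (Dv H v).Adj (0, x) (1, y) ↔ x = v := by
      rw [adj_of_fst_ne (by simp)]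
      simp
    have h2 : (Dv H v).Adj (g s) (0, a) ↔ a = v := by
      rw [adj_of_fst_ne (by simp [hs])]
      simp [Prod.ext_iff, hs]
    rw [← h1, ← h2, ← hy]
    exact (g.map_adj_iff (v := s) (w := ⟨(1, y), Or.inr rfl⟩)).symm
  obtain ⟨a, hav⟩ := exists_ne v
  obtain ⟨y, hy⟩ := hi (rfl : ((0, v) : Fin 2 × V).1 = 0)
  obtain ⟨z, hz⟩ := hi (rfl : ((0, a) : Fin 2 × V).1 = 0)
  exact hav ((key a z hz).1 ((key v y hy).2 rfl))

lemma not_containsExtendedCopy [Finite V] [Nontrivial V] (hconn : H.Connected)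
    (hH : H.CliqueFree 3) (hpend : ∀ u, (H.neighborSet u).ncard ≠ 1) (f : G ↪g Dv H v)
    (h0 : {p | p.1 = 0} ⊆ Set.range f) (hDG : ¬ Dv H v ⊴ G) :
    ¬ ContainsExtendedCopy H v G := by
  rintro ⟨x, ⟨u⟩⟩
  exact hDG (isIndContained_of_copy_subset_range f h0
    ((copy_subset_range_of_extendedCopy hconn hH hpend (u.trans f)).trans
      (Embedding.range_trans_subset u f)))

lemma ContainsExtendedCopy.of_isIndContained [Finite V] [Nontrivial V] (hconn : H.Connected)
    (hH : H.CliqueFree 3) (hpend : ∀ u, (H.neighborSet u).ncard ≠ 1)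
    (hG : ContainsExtendedCopy H v G) (hHG' : H ⊴ G') (hG'H : ¬ G' ⊴ H) (hG'G : G' ⊴ G)
    (hGD : G ⊴ Dv H v) (hDG : ¬ Dv H v ⊴ G) : ContainsExtendedCopy H v G' := by
  obtain ⟨e⟩ := hHG'
  obtain ⟨g⟩ := hG'G
  obtain ⟨f⟩ := hGD
  obtain ⟨i, hi⟩ := exists_copy_subset_range hconn hH hpend (e.trans (g.trans f))
  replace hi := hi.trans (Embedding.range_trans_subset e (g.trans f))
  rcases (by omega : i = 0 ∨ i = 1) with rfl | rfl
  · exact absurd hG (not_containsExtendedCopy hconn hH hpend f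
      (hi.trans (Embedding.range_trans_subset g f)) hDG)
  · exact containsExtendedCopy_of_copy_subset_range hG'H (g.trans f) hi

end Dv

namespace FinGraph

variable {X Y Z : FinGraph}

lemma contains_iff_isIndContained : X.Contains Y ↔ X.2 ⊴ Y.2 :=
  ⟨fun ⟨f, hf⟩ => ⟨⟨f, hf _ _⟩⟩,
    fun ⟨f⟩ => ⟨f.toEmbedding, fun _ _ => f.map_adj_iff⟩⟩

lemma Contains.trans (h : X.Contains Y) (h' : Y.Contains Z) : X.Contains Z :=
  contains_iff_isIndContained.2
    ((contains_iff_isIndContained.1 h).trans (contains_iff_isIndContained.1 h'))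

lemma Iso.symm (h : X.Iso Y) : Y.Iso X := h.map fun e => e.symm

lemma Iso.trans (h : X.Iso Y) (h' : Y.Iso Z) : X.Iso Z :=
  Nonempty.map2 (fun e e' => e.trans e') h h'

lemma Iso.contains (h : X.Iso Y) : X.Contains Y :=
  contains_iff_isIndContained.2 (h.elim SimpleGraph.Iso.isIndContained)

lemma Iso.order_eq (h : X.Iso Y) : X.order = Y.order := by
  obtain ⟨e⟩ := h
  simpa [order] using Fintype.card_congr e.toEquiv

noncomputable def isoOf {V : Type} [Fintype V] (G : SimpleGraph V) : (FinGraph.of G).2 ≃g G :=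
  SimpleGraph.Iso.comap (Fintype.equivFin V).symm G

lemma order_of {V : Type} [Fintype V] (G : SimpleGraph V) :
    (FinGraph.of G).order = Fintype.card V := rfl

end FinGraph

namespace StrictlyBetween

open FinGraph

variable {H G X Y : FinGraph}

lemma of_iso (hX : StrictlyBetween H G X) (h : X.Iso Y) : StrictlyBetween H G Y :=
  ⟨hX.1.trans h.contains, h.symm.contains.trans hX.2.1, fun h' => hX.2.2.1 (h.trans h'),
    fun h' => hX.2.2.2 (h.trans h')⟩

lemma not_isIndContained_left (hX : StrictlyBetween H G X) : ¬ X.2 ⊴ H.2 := fun h =>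
  hX.2.2.1 (h.nonempty_iso (contains_iff_isIndContained.1 hX.1))

lemma not_isIndContained_right (hX : StrictlyBetween H G X) : ¬ G.2 ⊴ X.2 := fun h =>
  hX.2.2.2 ((contains_iff_isIndContained.1 hX.2.1).nonempty_iso h)

lemma isIndContained_right_of {V : Type} [Fintype V] {K : SimpleGraph V}
    (hX : StrictlyBetween H (FinGraph.of K) X) : X.2 ⊴ K :=
  (contains_iff_isIndContained.1 hX.2.1).trans (isoOf K).isIndContained

lemma not_isIndContained_right_of {V : Type} [Fintype V] {K : SimpleGraph V}
    (hX : StrictlyBetween H (FinGraph.of K) X) : ¬ K ⊴ X.2 := fun h =>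
  hX.not_isIndContained_right ((isoOf K).isIndContained.trans h)

lemma of_order {V : Type} [Fintype V] {K : SimpleGraph V} (hHK : H.2 ⊴ K) (hKG : K ⊴ G.2)
    (hH : Fintype.card V ≠ H.order) (hG : Fintype.card V ≠ G.order) :
    StrictlyBetween H G (FinGraph.of K) :=
  ⟨contains_iff_isIndContained.2 (hHK.trans (isoOf K).isIndContained'),
    contains_iff_isIndContained.2 ((isoOf K).isIndContained.trans hKG),
    fun h => hH h.order_eq, fun h => hG h.order_eq⟩

end StrictlyBetween

lemma IntervalDisconnected.of_contains_invariant {H G : FinGraph} (P : FinGraph → Prop)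
    (hP : ∀ X Y, StrictlyBetween H G X → StrictlyBetween H G Y →
      X.Contains Y → (P X ↔ P Y))
    (hA : ∃ X, StrictlyBetween H G X ∧ P X) (hB : ∃ X, StrictlyBetween H G X ∧ ¬ P X) :
    IntervalDisconnected H G := by
  refine ⟨{X | StrictlyBetween H G X ∧ P X}, {X | StrictlyBetween H G X ∧ ¬ P X}, hA, hB,
    Set.disjoint_left.2 fun X hXA hXB => hXB.2 hXA.2, fun X => ?_, ?_, ?_, ?_⟩
  · by_cases hPX : P X <;> simp [hPX]
  · exact fun X ⟨hX, hPX⟩ Y h =>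
      ⟨hX.of_iso h, (hP X Y hX (hX.of_iso h) h.contains).1 hPX⟩
  · exact fun X ⟨hX, hPX⟩ Y h =>
      ⟨hX.of_iso h, fun hPY => hPX ((hP X Y hX (hX.of_iso h) h.contains).2 hPY)⟩
  · exact fun X ⟨hX, hPX⟩ Y ⟨hY, hPY⟩ =>
      ⟨fun h => hPY ((hP X Y hX hY h).1 hPX), fun h => hPY ((hP Y X hY hX h).2 hPX)⟩

lemma FinGraph.cliqueFree_three_of_not_contains {H : FinGraph}
    (h : ¬ FinGraph.Contains ⟨3, cycleGraph 3⟩ H) : H.2.CliqueFree 3 := by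
  by_contra hK
  refine h (FinGraph.contains_iff_isIndContained.2 ?_)
  show cycleGraph 3 ⊴ H.2
  rw [cycleGraph_three_eq_top, top_isIndContained_iff_top_isContained]
  exact (not_cliqueFree_iff_top_isContained 3).1 hK

open Classical in
lemma Dv.strictlyBetween_induce_insert {n : ℕ} (hn : 2 ≤ n) (H : SimpleGraph (Fin n))
    (v x : Fin n) {i j : Fin 2} (hij : j ≠ i) :
    StrictlyBetween ⟨n, H⟩ (.of (Dv H v))
      (.of ((Dv H v).induce (insert (j, x) {p | p.1 = i}))) := by
  have hcard : Fintype.card ↥(insert (j, x) {p : Fin 2 × Fin n | p.1 = i}) = n + 1 := by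
    rw [← Nat.card_eq_fintype_card, Nat.card_coe_set_eq, ncard_insert_copy hij, Nat.card_fin]
  refine .of_order ((copyEmbedding i).isIndContained_induce ?_)
    ((Embedding.induce _).isIndContained.trans (FinGraph.isoOf _).isIndContained') ?_ ?_
  · rw [range_copyEmbedding]
    exact Set.subset_insert _ _
  · simp [hcard, FinGraph.order]
  · simp [hcard, FinGraph.order_of]
    omega

open FinGraph Dv in
/-- For a connected graph `H` with at least `3` vertices, no induced triangle and
no pendant vertices, the interval `[H, D_v(H)]` is disconnected for every vertex `v`. -/
theorem interval_Dv_disconnected (H : FinGraph) (hconn : H.2.Connected)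
    (hcard : 3 ≤ H.order)
    (htriangleFree : ¬ FinGraph.Contains ⟨3, SimpleGraph.cycleGraph 3⟩ H)
    (hpendantFree : ∀ u : Fin H.1, (H.2.neighborSet u).ncard ≠ 1)
    (v : Fin H.1) :
    IntervalDisconnected H (FinGraph.of (Dv H.2 v)) := by
  classical
  obtain ⟨n, H⟩ := H
  replace hcard : 3 ≤ n := hcard
  have hH : H.CliqueFree 3 := cliqueFree_three_of_not_contains htriangleFree
  have : Nontrivial (Fin n) := Fin.nontrivial_iff_two_le.2 (by omega)
  have hA := strictlyBetween_induce_insert (by omega) H v v (i := 1) (j := 0) (by decide)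
  have hB := strictlyBetween_induce_insert (by omega) H v v (i := 0) (j := 1) (by decide)
  refine .of_contains_invariant (fun X => ContainsExtendedCopy H v X.2)
    (fun X Y hX hY hXY => ⟨fun hPX => hPX.mono (contains_iff_isIndContained.1 hXY),
      fun hPY => hPY.of_isIndContained hconn hH hpendantFree (contains_iff_isIndContained.1 hX.1)
        hX.not_isIndContained_left (contains_iff_isIndContained.1 hXY)
        hY.isIndContained_right_of hY.not_isIndContained_right_of⟩)
    ⟨_, hA, v, (isoOf _).isIndContained'⟩ ⟨_, hB, fun hP => ?_⟩
  refine not_containsExtendedCopy hconn hH hpendantFree (Embedding.induce _) (by simp)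
    (fun h => hB.not_isIndContained_right_of (h.trans (isoOf _).isIndContained'))
    (hP.mono (isoOf _).isIndContained)
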